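/- arXiv:2110.13537 — 2 statements merged into one kernel-verified Lean document; each statement's English description precedes it below -/
import Mathlib

section
/- Let H be a real Hilbert space, V₀ ⊆ V ⊆ H subspaces, and let a finite family of subspaces V₁,…,V_N of V be given together with linear maps Π_j : V → V_j and Ξ_j : V → V. Suppose that for each v ∈ V we have v = Σ_{j=1}^N Ξ_j(v − Π_j v) + z₀(v) with z₀(v) ∈ V₀, that ‖Σ_{j=1}^N w_j‖² ≤ k₀ Σ_{j=1}^N ‖w_j‖²_j for all w_j in appropriate local norms, that ‖Ξ_j(v − Π_j v)‖²_j ≤ Θ ‖v − Π_j v‖²_j, that ‖v − Π_j v‖_j ≤ ‖v‖_j, and that Σ_{j=1}^N ‖v‖²_j ≤ k₀ ‖v‖². Then inf_{z ∈ V₀} ‖v − z‖² ≤ k₀² Θ ‖v‖² for all v ∈ V. -/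
/-! Subtracting the coarse component `z₀ v` leaves the sum of the local corrections
`Ξ_j (v - Π_j v)`. Finite overlap bounds its squared norm by `k₀` times the sum of their local
squared norms, the local spectral estimate and projection stability bound each of those by
`Θ ‖v‖²_j`, and bounded overlap bounds `∑ ‖v‖²_j` by `k₀ ‖v‖²`. -/

open Finset

lemma ciInf_le_of_nonneg {ι : Sort*} {f : ι → ℝ} (hf : ∀ i, 0 ≤ f i) (i : ι) :
    ⨅ i, f i ≤ f i :=
  ciInf_le ⟨0, Set.forall_mem_range.2 hf⟩ i

lemma localCorrection_mem {ι H : Type*} [AddCommGroup H] [Module ℝ H] {V : Submodule ℝ H}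
    {Vj : ι → Submodule ℝ H} {Pj Xi : ι → H → H} (hVj : ∀ j, Vj j ≤ V)
    (hPj : ∀ j, ∀ v ∈ V, Pj j v ∈ Vj j) (hXi : ∀ j, ∀ v ∈ V, Xi j v ∈ Vj j)
    {v : H} (hv : v ∈ V) (j : ι) : Xi j (v - Pj j v) ∈ Vj j :=
  hXi j _ (V.sub_mem hv (hVj j (hPj j v hv)))

lemma sum_sq_localNorm_localCorrection_le {ι H : Type*} [Fintype ι] [AddGroup H]
    {Pj Xi : ι → H → H} {nrm : ι → H → ℝ} {Θ : ℝ} (hΘ : 0 ≤ Θ) {v : H}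
    (hspec : ∀ j, nrm j (Xi j (v - Pj j v)) ^ 2 ≤ Θ * nrm j (v - Pj j v) ^ 2)
    (hstab : ∀ j, nrm j (v - Pj j v) ≤ nrm j v) (hnrm : ∀ j, 0 ≤ nrm j (v - Pj j v)) :
    ∑ j, nrm j (Xi j (v - Pj j v)) ^ 2 ≤ Θ * ∑ j, nrm j v ^ 2 := by
  rw [mul_sum]
  gcongr with j
  calc nrm j (Xi j (v - Pj j v)) ^ 2 ≤ Θ * nrm j (v - Pj j v) ^ 2 := hspec j
    _ ≤ Θ * nrm j v ^ 2 := by gcongr; exacts [hnrm j, hstab j]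

theorem stmt_3_general {H : Type*} [NormedAddCommGroup H] [InnerProductSpace ℝ H]
    (V₀ V : Submodule ℝ H) (N : ℕ)
    (Vj : Fin N → Submodule ℝ H) (hVj : ∀ j, Vj j ≤ V)
    (Pj Xi : Fin N → H →ₗ[ℝ] H)
    (hPj : ∀ j, ∀ v ∈ V, Pj j v ∈ Vj j)
    (hXi : ∀ j, ∀ v ∈ V, Xi j v ∈ Vj j)
    (nrm : Fin N → H → ℝ) (k₀ Θ : ℝ) (hk₀ : 0 ≤ k₀) (hΘ : 0 ≤ Θ)
    (z₀ : H → H) (hz₀ : ∀ v ∈ V, z₀ v ∈ V₀)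
    (hdecomp : ∀ v ∈ V, v = (∑ j, Xi j (v - Pj j v)) + z₀ v)
    (hoverlap : ∀ w : Fin N → H, (∀ j, w j ∈ Vj j) →
      ‖∑ j, w j‖ ^ 2 ≤ k₀ * ∑ j, (nrm j (w j)) ^ 2)
    (hspec : ∀ j, ∀ v ∈ V, (nrm j (Xi j (v - Pj j v))) ^ 2 ≤ Θ * (nrm j (v - Pj j v)) ^ 2)
    (hstab : ∀ j, ∀ v ∈ V, nrm j (v - Pj j v) ≤ nrm j v)
    (hnrm : ∀ j v, 0 ≤ nrm j v)
    (hsum : ∀ v ∈ V, ∑ j, (nrm j v) ^ 2 ≤ k₀ * ‖v‖ ^ 2) :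
    ∀ v ∈ V, ⨅ z : V₀, ‖v - (z : H)‖ ^ 2 ≤ k₀ ^ 2 * Θ * ‖v‖ ^ 2 := by
  intro v hv
  have hcoarse : v - z₀ v = ∑ j, Xi j (v - Pj j v) := sub_eq_iff_eq_add.2 (hdecomp v hv)
  have hlocal := sum_sq_localNorm_localCorrection_le hΘ (hspec · v hv) (hstab · v hv)
    (fun j => hnrm j _)
  calc ⨅ z : V₀, ‖v - (z : H)‖ ^ 2 ≤ ‖v - z₀ v‖ ^ 2 :=
        ciInf_le_of_nonneg (fun _ => sq_nonneg _) (⟨z₀ v, hz₀ v hv⟩ : V₀)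
    _ ≤ k₀ * ∑ j, nrm j (Xi j (v - Pj j v)) ^ 2 :=
        hcoarse ▸ hoverlap _ (localCorrection_mem hVj hPj hXi hv)
    _ ≤ k₀ * (Θ * (k₀ * ‖v‖ ^ 2)) := by
        gcongr
        exact hlocal.trans (by gcongr; exact hsum v hv)
    _ = k₀ ^ 2 * Θ * ‖v‖ ^ 2 := by ring

theorem stmt_3 {H : Type*} [NormedAddCommGroup H] [InnerProductSpace ℝ H]
    (V₀ V : Submodule ℝ H) (hV₀ : V₀ ≤ V) (N : ℕ)
    (Vj : Fin N → Submodule ℝ H) (hVj : ∀ j, Vj j ≤ V)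
    (Pj Xi : Fin N → H →ₗ[ℝ] H)
    (hPj : ∀ j, ∀ v ∈ V, Pj j v ∈ Vj j)
    (hXi : ∀ j, ∀ v ∈ V, Xi j v ∈ Vj j)
    (nrm : Fin N → H → ℝ) (k₀ Θ : ℝ) (hk₀ : 0 ≤ k₀) (hΘ : 0 ≤ Θ)
    (z₀ : H → H) (hz₀ : ∀ v ∈ V, z₀ v ∈ V₀)
    (hdecomp : ∀ v ∈ V, v = (∑ j, Xi j (v - Pj j v)) + z₀ v)
    (hoverlap : ∀ w : Fin N → H, (∀ j, w j ∈ Vj j) →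
      ‖∑ j, w j‖ ^ 2 ≤ k₀ * ∑ j, (nrm j (w j)) ^ 2)
    (hspec : ∀ j, ∀ v ∈ V, (nrm j (Xi j (v - Pj j v))) ^ 2 ≤ Θ * (nrm j (v - Pj j v)) ^ 2)
    (hstab : ∀ j, ∀ v ∈ V, nrm j (v - Pj j v) ≤ nrm j v)
    (hnrm : ∀ j v, 0 ≤ nrm j v)
    (hsum : ∀ v ∈ V, ∑ j, (nrm j v) ^ 2 ≤ k₀ * ‖v‖ ^ 2) :
    ∀ v ∈ V, ⨅ z : V₀, ‖v - (z : H)‖ ^ 2 ≤ k₀ ^ 2 * Θ * ‖v‖ ^ 2 :=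
  stmt_3_general V₀ V N Vj hVj Pj Xi hPj hXi nrm k₀ Θ hk₀ hΘ z₀ hz₀ hdecomp hoverlap hspec hstab
    hnrm hsum
end

section
/- Let ‖·‖₁ and ‖·‖₂ be two norms on ℝⁿ satisfying γ₁·‖x‖₁ ≤ ‖x‖₂ ≤ γ₂·‖x‖₁ for all x, with 0 < γ₁ ≤ γ₂. Suppose two sequences of residuals (r₁ᵐ) and (r₂ᵐ) with common initial residual r⁰ satisfy: r₂ᵐ minimizes ‖·‖₂ over a nested family of affine subspaces containing r₁ᵐ (so that ‖r₂ᵐ‖₂ ≤ ‖r₁ᵐ‖₂ for all m), and ‖r₁ᵐ‖₁ ≤ σᵐ‖r⁰‖₁ for some 0 < σ < 1. Then for any natural number Δm with Δm·log(1/σ) ≥ log(γ₂/γ₁), we have ‖r₂^{m+Δm}‖₂ ≤ σᵐ‖r⁰‖₂ for all m. -/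
/-! Passing from `N₂` to `N₁` costs a factor `γ₂` and coming back gains `1 / γ₁`; the hypothesis
on `Δm` says exactly that `Δm` further steps of the `σ`-decay absorb the ratio `γ₂ / γ₁`. -/

open Real

theorem mul_pow_le_of_log_div_le_mul_log {γ₁ γ₂ σ : ℝ} (hγ₁ : 0 < γ₁) (hσ : 0 < σ) {k : ℕ}
    (h : log (γ₂ / γ₁) ≤ k * log (1 / σ)) : γ₂ * σ ^ k ≤ γ₁ := by
  have hratio : γ₂ / γ₁ ≤ (1 / σ) ^ k :=
    calc γ₂ / γ₁ ≤ exp (log (γ₂ / γ₁)) := le_exp_log _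
      _ ≤ exp (k * log (1 / σ)) := exp_le_exp.mpr h
      _ = (1 / σ) ^ k := by rw [← log_pow, exp_log (by positivity)]
  rw [one_div_pow, div_le_div_iff₀ hγ₁ (by positivity)] at hratio
  linarith

theorem stmt_6_general (n : ℕ) (N₁ N₂ : (Fin n → ℝ) → ℝ)
    (hN₁ : ∀ x, 0 ≤ N₁ x)
    (γ₁ γ₂ : ℝ) (hγ₁ : 0 < γ₁) (hγ : γ₁ ≤ γ₂)
    (hequiv : ∀ x, γ₁ * N₁ x ≤ N₂ x ∧ N₂ x ≤ γ₂ * N₁ x)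
    (r₁ r₂ : ℕ → Fin n → ℝ) (r₀ : Fin n → ℝ)
    (hmin : ∀ m, N₂ (r₂ m) ≤ N₂ (r₁ m))
    (σ : ℝ) (hσ0 : 0 < σ)
    (hdecay : ∀ m, N₁ (r₁ m) ≤ σ ^ m * N₁ r₀)
    (Δm : ℕ) (hΔm : Real.log (γ₂ / γ₁) ≤ (Δm : ℝ) * Real.log (1 / σ)) :
    ∀ m : ℕ, N₂ (r₂ (m + Δm)) ≤ σ ^ m * N₂ r₀ := by
  intro m
  have hγ₂ : 0 ≤ γ₂ := hγ₁.le.trans hγ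
  have hN₁r₀ := hN₁ r₀
  calc N₂ (r₂ (m + Δm)) ≤ N₂ (r₁ (m + Δm)) := hmin _
    _ ≤ γ₂ * N₁ (r₁ (m + Δm)) := (hequiv _).2
    _ ≤ γ₂ * (σ ^ (m + Δm) * N₁ r₀) := by gcongr; exact hdecay _
    _ = σ ^ m * (γ₂ * σ ^ Δm) * N₁ r₀ := by ring
    _ ≤ σ ^ m * γ₁ * N₁ r₀ := by gcongr; exact mul_pow_le_of_log_div_le_mul_log hγ₁ hσ0 hΔm
    _ ≤ σ ^ m * N₂ r₀ := by rw [mul_assoc]; gcongr; exact (hequiv _).1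

theorem stmt_6 (n : ℕ) (N₁ N₂ : (Fin n → ℝ) → ℝ)
    (hN₁ : ∀ x, 0 ≤ N₁ x) (hN₂ : ∀ x, 0 ≤ N₂ x)
    (γ₁ γ₂ : ℝ) (hγ₁ : 0 < γ₁) (hγ : γ₁ ≤ γ₂)
    (hequiv : ∀ x, γ₁ * N₁ x ≤ N₂ x ∧ N₂ x ≤ γ₂ * N₁ x)
    (r₁ r₂ : ℕ → Fin n → ℝ) (r₀ : Fin n → ℝ)
    (hinit₁ : r₁ 0 = r₀) (hinit₂ : r₂ 0 = r₀)
    (hmin : ∀ m, N₂ (r₂ m) ≤ N₂ (r₁ m))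
    (σ : ℝ) (hσ0 : 0 < σ) (hσ1 : σ < 1)
    (hdecay : ∀ m, N₁ (r₁ m) ≤ σ ^ m * N₁ r₀)
    (Δm : ℕ) (hΔm : Real.log (γ₂ / γ₁) ≤ (Δm : ℝ) * Real.log (1 / σ)) :
    ∀ m : ℕ, N₂ (r₂ (m + Δm)) ≤ σ ^ m * N₂ r₀ :=
  stmt_6_general n N₁ N₂ hN₁ γ₁ γ₂ hγ₁ hγ hequiv r₁ r₂ r₀ hmin σ hσ0 hdecay Δm hΔm
end
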